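/- arXiv:1103.1409 — 3 statements merged into one kernel-verified Lean document; each statement's English description precedes it below -/
import Mathlib

section
/- Let n, p ∈ ℕ, let A, B ∈ ℝ^{p×n}, and let M ∈ ℝ^{p×p}. Define linear relations G̃ and Ĝ by gra G̃ = {(x,x*) ∈ ℝⁿ × ℝⁿ : Mᵀ(Ax + Bx*) = 0} and gra Ĝ = {(Bᵀu, −Aᵀu) : u ∈ ran M}. Then the adjoint of G̃ equals Ĝ, i.e., gra (G̃)* = gra Ĝ. -/
/-! The graph of `G̃` is the kernel of `N (x, x*) = (MᵀA) x + (MᵀB) x*`. A pair `q` lies in the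
adjoint graph iff the functional `s ↦ q.1 ⬝ s.2 - q.2 ⬝ s.1` vanishes on `ker N`, i.e. iff it
factors through `N` as `c ⬝ N` (the range of a dual map is the annihilator of the kernel).
Comparing coefficients gives `q = ((MᵀB)ᵀ c, -(MᵀA)ᵀ c) = (Bᵀ u, -Aᵀ u)` with `u = M c`. -/

open Matrix Pointwise

/-- Sum of the eigenspaces of `M + Mᵀ` corresponding to positive eigenvalues. -/
noncomputable def Vpos {m : ℕ} (M : Matrix (Fin m) (Fin m) ℝ) :
    Submodule ℝ (Fin m → ℝ) :=
  ⨆ μ : {t : ℝ // 0 < t}, Module.End.eigenspace (Matrix.mulVecLin (M + Mᵀ)) (μ : ℝ)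

/-- Eigenspace of `M + Mᵀ` for the eigenvalue `0`. -/
noncomputable def Vzero {m : ℕ} (M : Matrix (Fin m) (Fin m) ℝ) :
    Submodule ℝ (Fin m → ℝ) :=
  Module.End.eigenspace (Matrix.mulVecLin (M + Mᵀ)) 0

/-- Sum of the eigenspaces of `M + Mᵀ` corresponding to negative eigenvalues. -/
noncomputable def Vneg {m : ℕ} (M : Matrix (Fin m) (Fin m) ℝ) :
    Submodule ℝ (Fin m → ℝ) :=
  ⨆ μ : {t : ℝ // t < 0}, Module.End.eigenspace (Matrix.mulVecLin (M + Mᵀ)) (μ : ℝ)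

/-- A set `S ⊆ ℝⁿ × ℝⁿ` is monotone. -/
def IsMonotoneSet {n : ℕ} (S : Set ((Fin n → ℝ) × (Fin n → ℝ))) : Prop :=
  ∀ a ∈ S, ∀ b ∈ S, 0 ≤ (a.1 - b.1) ⬝ᵥ (a.2 - b.2)

/-- A set `S ⊆ ℝⁿ × ℝⁿ` is maximally monotone. -/
def IsMaxMonotoneSet {n : ℕ} (S : Set ((Fin n → ℝ) × (Fin n → ℝ))) : Prop :=
  IsMonotoneSet S ∧ ∀ a, (∀ b ∈ S, 0 ≤ (a.1 - b.1) ⬝ᵥ (a.2 - b.2)) → a ∈ S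

/-- Graph of the adjoint relation: `(x, x*) ∈ gra T*` iff `(x*, -x) ⟂ gra T`. -/
def adjGraph {n : ℕ} (S : Set ((Fin n → ℝ) × (Fin n → ℝ))) :
    Set ((Fin n → ℝ) × (Fin n → ℝ)) :=
  {q | ∀ s ∈ S, q.2 ⬝ᵥ s.1 - q.1 ⬝ᵥ s.2 = 0}

theorem LinearMap.ker_le_ker_iff_exists_dotProduct {K V ι : Type*} [Field K] [AddCommGroup V]
    [Module K V] [Fintype ι] (N : V →ₗ[K] ι → K) (f : Module.Dual K V) :
    LinearMap.ker N ≤ LinearMap.ker f ↔ ∃ c : ι → K, ∀ v, f v = c ⬝ᵥ N v := by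
  classical
  constructor
  · intro h
    have hf : f ∈ LinearMap.range N.dualMap := by
      rw [LinearMap.range_dualMap_eq_dualAnnihilator_ker, Submodule.mem_dualAnnihilator]
      exact fun v hv => h hv
    obtain ⟨φ, rfl⟩ := hf
    refine ⟨(dotProductEquiv K ι).symm φ, fun v => ?_⟩
    rw [← dotProductEquiv_apply_apply, LinearEquiv.apply_symm_apply, LinearMap.dualMap_apply]
  · rintro ⟨c, hc⟩ v hv
    rw [LinearMap.mem_ker] at hv ⊢
    rw [hc, hv, dotProduct_zero]

theorem forall_dotProduct_add_dotProduct_eq_iff {K ι κ : Type*} [CommRing K] [Fintype ι]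
    [Fintype κ] {a a' : ι → K} {b b' : κ → K} :
    (∀ x y, a ⬝ᵥ x + b ⬝ᵥ y = a' ⬝ᵥ x + b' ⬝ᵥ y) ↔ a = a' ∧ b = b' := by
  refine ⟨fun h => ⟨dotProduct_eq _ _ fun x => ?_, dotProduct_eq _ _ fun y => ?_⟩,
    by rintro ⟨rfl, rfl⟩ _ _; rfl⟩
  · simpa using h x 0
  · simpa using h 0 y

theorem adjGraph_setOf_mulVec_add_mulVec_eq_zero {n : ℕ} {ι : Type*} [Fintype ι]
    (C D : Matrix ι (Fin n) ℝ) :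
    adjGraph {q : (Fin n → ℝ) × (Fin n → ℝ) | C *ᵥ q.1 + D *ᵥ q.2 = 0} =
      Set.range fun c => (Dᵀ *ᵥ c, -(Cᵀ *ᵥ c)) := by
  ext q
  let N := (mulVecLin C).coprod (mulVecLin D)
  let f : Module.Dual ℝ ((Fin n → ℝ) × (Fin n → ℝ)) :=
    (-dotProductBilin ℝ ℝ q.2).coprod (dotProductBilin ℝ ℝ q.1)
  have hq : q ∈ adjGraph {q | C *ᵥ q.1 + D *ᵥ q.2 = 0} ↔ LinearMap.ker N ≤ LinearMap.ker f := by
    simp [adjGraph, SetLike.le_def, N, f, neg_add_eq_sub, sub_eq_zero, eq_comm]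
  rw [hq, LinearMap.ker_le_ker_iff_exists_dotProduct, Set.mem_range]
  refine exists_congr fun c => ?_
  calc (∀ s, f s = c ⬝ᵥ N s)
      ↔ ∀ x y, (-q.2) ⬝ᵥ x + q.1 ⬝ᵥ y = (Cᵀ *ᵥ c) ⬝ᵥ x + (Dᵀ *ᵥ c) ⬝ᵥ y := by
        simp [Prod.forall, N, f, dotProduct_mulVec, mulVec_transpose]
    _ ↔ -q.2 = Cᵀ *ᵥ c ∧ q.1 = Dᵀ *ᵥ c := forall_dotProduct_add_dotProduct_eq_iff
    _ ↔ (Dᵀ *ᵥ c, -(Cᵀ *ᵥ c)) = q := by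
        rw [Prod.ext_iff, neg_eq_iff_eq_neg, and_comm, eq_comm (a := q.1), eq_comm (a := q.2)]

/-- for any `M ∈ ℝ^{p×p}`, the adjoint of
`G̃ = {(x,x*) : Mᵀ(Ax + Bx*) = 0}` is `Ĝ = {(Bᵀu, −Aᵀu) : u ∈ ran M}`. -/
theorem stmt8 {n p : ℕ} (A B : Matrix (Fin p) (Fin n) ℝ)
    (M : Matrix (Fin p) (Fin p) ℝ) :
    adjGraph {q : (Fin n → ℝ) × (Fin n → ℝ) | Mᵀ *ᵥ (A *ᵥ q.1 + B *ᵥ q.2) = 0} =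
      {q : (Fin n → ℝ) × (Fin n → ℝ) |
        ∃ u ∈ Set.range (fun v : Fin p → ℝ => M *ᵥ v), q = (Bᵀ *ᵥ u, -(Aᵀ *ᵥ u))} := by
  simp_rw [mulVec_add, mulVec_mulVec]
  rw [adjGraph_setOf_mulVec_add_mulVec_eq_zero]
  ext q
  simp [transpose_mul, ← mulVec_mulVec, eq_comm]
end

section
/- Let n, p ∈ ℕ, let A, B ∈ ℝ^{p×n}, assume the p×2n matrix (A B) has rank p, and let G be the linear relation with graph gra G = {(x,x*) ∈ ℝⁿ × ℝⁿ : Ax + Bx* = 0}. Assume G is monotone. Then the linear relation G̃ with graph gra G̃ = gra G + {(Bᵀu, Aᵀu) : u ∈ V₊(BAᵀ)} is maximally monotone and gra G ⊆ gra G̃. -/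
/-!
The pairing `⟨x, x*⟩` on `ℝⁿ × ℝⁿ` has signature `(n, n)`, so a subspace on which it is
nonnegative (or nonpositive) has dimension at most `n`; a subspace of nonnegative pairing is
monotone, and if its dimension is `n` it is maximally monotone, since adjoining a point
monotonically related to it would give a larger subspace of nonnegative pairing.
For `g ∈ gra G` the cross terms of `g + (Bᵀu, Aᵀu)` cancel because `Ag + Bg* = 0`, leaving
`⟨g, g*⟩ + ⟨u, BAᵀu⟩ ≥ 0` when `u ∈ V₊(BAᵀ)`. The rank hypothesis makes `u ↦ (Bᵀu, Aᵀu)`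
injective; it maps `V₀ ⊕ V₋` to a subspace of nonpositive pairing, so `dim V₊ ≥ p - n`, and it
meets `gra G` only on `V₀`. Hence `dim gra G̃ = (2n - p) + dim V₊ ≥ n`.
-/

open Matrix Pointwise

section DotProduct

variable {ι : Type*} [Fintype ι]

lemma Matrix.IsSymm.dotProduct_mulVec_comm {S : Matrix ι ι ℝ} (hS : S.IsSymm) (u v : ι → ℝ) :
    u ⬝ᵥ (S *ᵥ v) = (S *ᵥ u) ⬝ᵥ v := by
  rw [dotProduct_mulVec, ← vecMul_transpose, hS.eq]

lemma Matrix.IsSymm.dotProduct_eq_zero_of_mem_eigenspace {S : Matrix ι ι ℝ} (hS : S.IsSymm)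
    {μ ν : ℝ} (hμν : μ ≠ ν) {u v : ι → ℝ} (hu : u ∈ Module.End.eigenspace S.mulVecLin μ)
    (hv : v ∈ Module.End.eigenspace S.mulVecLin ν) : u ⬝ᵥ v = 0 := by
  rw [Module.End.mem_eigenspace_iff, mulVecLin_apply] at hu hv
  have hμ : (S *ᵥ u) ⬝ᵥ v = μ * (u ⬝ᵥ v) := by rw [hu, smul_dotProduct, smul_eq_mul]
  have hν : (S *ᵥ u) ⬝ᵥ v = ν * (u ⬝ᵥ v) := by
    rw [← hS.dotProduct_mulVec_comm, hv, dotProduct_smul, smul_eq_mul]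
  exact (mul_eq_mul_right_iff.1 (hμ.symm.trans hν)).resolve_left hμν

lemma Matrix.IsSymm.dotProduct_eq_zero_of_mem_iSup_eigenspace {S : Matrix ι ι ℝ}
    (hS : S.IsSymm) {P : ℝ → Prop} {μ : ℝ} (hμ : ¬ P μ) {w u : ι → ℝ}
    (hw : w ∈ Module.End.eigenspace S.mulVecLin μ)
    (hu : u ∈ ⨆ ν : {t : ℝ // P t}, Module.End.eigenspace S.mulVecLin ν) : w ⬝ᵥ u = 0 :=
  Submodule.iSup_induction _ (motive := fun u => w ⬝ᵥ u = 0) hu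
    (fun ν _ hv => hS.dotProduct_eq_zero_of_mem_eigenspace (by rintro rfl; exact hμ ν.2) hw hv)
    (dotProduct_zero w) fun a b ha hb => by rw [dotProduct_add, ha, hb, add_zero]

variable [DecidableEq ι]

lemma Matrix.IsHermitian.eigenvectorBasis_mem_eigenspace {S : Matrix ι ι ℝ} (hS : S.IsHermitian)
    (i : ι) :
    ⇑(hS.eigenvectorBasis i) ∈ Module.End.eigenspace S.mulVecLin (hS.eigenvalues i) := by
  rw [Module.End.mem_eigenspace_iff, mulVecLin_apply]
  exact hS.mulVec_eigenvectorBasis i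

lemma Matrix.IsHermitian.dotProduct_mulVec_self_eq_sum {S : Matrix ι ι ℝ} (hS : S.IsHermitian)
    (u : ι → ℝ) :
    u ⬝ᵥ (S *ᵥ u) = ∑ i, hS.eigenvalues i * (⇑(hS.eigenvectorBasis i) ⬝ᵥ u) ^ 2 := by
  have hdot (x y : EuclideanSpace ℝ ι) : inner ℝ x y = ⇑x ⬝ᵥ ⇑y := by
    simp [PiLp.inner_apply, dotProduct, mul_comm]
  have h := hS.eigenvectorBasis.sum_inner_mul_inner (WithLp.toLp 2 u) (WithLp.toLp 2 (S *ᵥ u))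
  simp only [hdot] at h
  rw [← h]
  refine Finset.sum_congr rfl fun i _ => ?_
  rw [(isHermitian_iff_isSymm.1 hS).dotProduct_mulVec_comm, hS.mulVec_eigenvectorBasis,
    smul_dotProduct, smul_eq_mul, dotProduct_comm u]
  ring

end DotProduct

section Eigenspaces

variable {m : ℕ} {M : Matrix (Fin m) (Fin m) ℝ}

lemma dotProduct_add_transpose_mulVec_self (M : Matrix (Fin m) (Fin m) ℝ) (u : Fin m → ℝ) :
    u ⬝ᵥ ((M + Mᵀ) *ᵥ u) = 2 * (u ⬝ᵥ (M *ᵥ u)) := by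
  rw [add_mulVec, dotProduct_add, mulVec_transpose, dotProduct_comm u (u ᵥ* M),
    ← dotProduct_mulVec]
  ring

lemma dotProduct_eq_zero_of_mem_Vpos {μ : ℝ} (hμ : μ ≤ 0) {w u : Fin m → ℝ}
    (hw : w ∈ Module.End.eigenspace (M + Mᵀ).mulVecLin μ) (hu : u ∈ Vpos M) : w ⬝ᵥ u = 0 :=
  (isSymm_add_transpose_self M).dotProduct_eq_zero_of_mem_iSup_eigenspace (P := (0 < ·))
    hμ.not_gt hw hu

lemma dotProduct_eq_zero_of_mem_Vzero_sup_Vneg {μ : ℝ} (hμ : 0 < μ) {w u : Fin m → ℝ}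
    (hw : w ∈ Module.End.eigenspace (M + Mᵀ).mulVecLin μ) (hu : u ∈ Vzero M ⊔ Vneg M) :
    w ⬝ᵥ u = 0 := by
  have hS := isSymm_add_transpose_self M
  obtain ⟨a, ha, b, hb, rfl⟩ := Submodule.mem_sup.1 hu
  rw [dotProduct_add, hS.dotProduct_eq_zero_of_mem_eigenspace hμ.ne' hw ha,
    hS.dotProduct_eq_zero_of_mem_iSup_eigenspace (P := (· < 0)) hμ.not_gt hw hb, add_zero]

lemma dotProduct_mulVec_nonneg_of_mem_Vpos {u : Fin m → ℝ} (hu : u ∈ Vpos M) :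
    0 ≤ u ⬝ᵥ (M *ᵥ u) := by
  have hS := isHermitian_iff_isSymm.2 (isSymm_add_transpose_self M)
  suffices 0 ≤ u ⬝ᵥ ((M + Mᵀ) *ᵥ u) by
    rw [dotProduct_add_transpose_mulVec_self] at this; linarith
  rw [hS.dotProduct_mulVec_self_eq_sum]
  refine Finset.sum_nonneg fun i _ => ?_
  rcases le_or_gt (hS.eigenvalues i) 0 with h | h
  · simp [dotProduct_eq_zero_of_mem_Vpos h (hS.eigenvectorBasis_mem_eigenspace i) hu]
  · positivity

lemma dotProduct_mulVec_nonpos_of_mem_Vzero_sup_Vneg {u : Fin m → ℝ}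
    (hu : u ∈ Vzero M ⊔ Vneg M) : u ⬝ᵥ (M *ᵥ u) ≤ 0 := by
  have hS := isHermitian_iff_isSymm.2 (isSymm_add_transpose_self M)
  suffices u ⬝ᵥ ((M + Mᵀ) *ᵥ u) ≤ 0 by
    rw [dotProduct_add_transpose_mulVec_self] at this; linarith
  rw [hS.dotProduct_mulVec_self_eq_sum]
  refine Finset.sum_nonpos fun i _ => ?_
  rcases le_or_gt (hS.eigenvalues i) 0 with h | h
  · exact mul_nonpos_of_nonpos_of_nonneg h (sq_nonneg _)
  · simp [dotProduct_eq_zero_of_mem_Vzero_sup_Vneg h (hS.eigenvectorBasis_mem_eigenspace i) hu]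

lemma disjoint_Vpos_Vzero : Disjoint (Vpos M) (Vzero M) :=
  Submodule.disjoint_def.2 fun _ hpos hzero =>
    dotProduct_self_eq_zero.1 (dotProduct_eq_zero_of_mem_Vpos le_rfl hzero hpos)

lemma Vpos_sup_Vzero_sup_Vneg : Vpos M ⊔ (Vzero M ⊔ Vneg M) = ⊤ := by
  have hS := isHermitian_iff_isSymm.2 (isSymm_add_transpose_self M)
  let b := hS.eigenvectorBasis.toBasis.map (WithLp.linearEquiv 2 ℝ (Fin m → ℝ))
  rw [eq_top_iff, ← b.span_eq, Submodule.span_le]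
  rintro _ ⟨i, rfl⟩
  have hmem : b i ∈ Module.End.eigenspace (M + Mᵀ).mulVecLin (hS.eigenvalues i) :=
    hS.eigenvectorBasis_mem_eigenspace i
  rcases lt_trichotomy (hS.eigenvalues i) 0 with h | h | h
  · exact Submodule.mem_sup_right (Submodule.mem_sup_right
      (Submodule.mem_iSup_of_mem (p := fun μ : {t : ℝ // t < 0} =>
        Module.End.eigenspace (M + Mᵀ).mulVecLin μ) ⟨_, h⟩ hmem))
  · exact Submodule.mem_sup_right (Submodule.mem_sup_left (by rwa [Vzero, ← h]))
  · exact Submodule.mem_sup_left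
      (Submodule.mem_iSup_of_mem (p := fun μ : {t : ℝ // 0 < t} =>
        Module.End.eigenspace (M + Mᵀ).mulVecLin μ) ⟨_, h⟩ hmem)

end Eigenspaces

section Pairing

open Module

variable {ι : Type*} [Fintype ι]

lemma finrank_le_card_of_disjoint_graph (f : (ι → ℝ) →ₗ[ℝ] (ι → ℝ))
    {W : Submodule ℝ ((ι → ℝ) × (ι → ℝ))} (hW : Disjoint W f.graph) :
    finrank ℝ W ≤ Fintype.card ι := by
  have hgraph : finrank ℝ f.graph = Fintype.card ι := by
    rw [LinearMap.graph_eq_range_prod,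
      LinearMap.finrank_range_of_inj fun x y h => congrArg Prod.fst h, finrank_fintype_fun_eq_card]
  have := Submodule.finrank_add_finrank_le_of_disjoint hW
  rw [hgraph, finrank_prod, finrank_fintype_fun_eq_card] at this
  omega

lemma finrank_le_card_of_forall_dotProduct_nonneg {W : Submodule ℝ ((ι → ℝ) × (ι → ℝ))}
    (hW : ∀ z ∈ W, 0 ≤ z.1 ⬝ᵥ z.2) : finrank ℝ W ≤ Fintype.card ι := by
  refine finrank_le_card_of_disjoint_graph (-LinearMap.id)
    (Submodule.disjoint_def.2 fun z hzW hz => ?_)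
  rw [LinearMap.mem_graph_iff] at hz
  have h1 : z.1 = 0 := dotProduct_self_eq_zero.1
    (le_antisymm (by simpa [hz] using hW z hzW) (by simpa using dotProduct_self_star_nonneg z.1))
  exact Prod.ext h1 (by simp [hz, h1])

lemma finrank_le_card_of_forall_dotProduct_nonpos {W : Submodule ℝ ((ι → ℝ) × (ι → ℝ))}
    (hW : ∀ z ∈ W, z.1 ⬝ᵥ z.2 ≤ 0) : finrank ℝ W ≤ Fintype.card ι := by
  refine finrank_le_card_of_disjoint_graph LinearMap.id
    (Submodule.disjoint_def.2 fun z hzW hz => ?_)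
  rw [LinearMap.mem_graph_iff] at hz
  have h1 : z.1 = 0 := dotProduct_self_eq_zero.1
    (le_antisymm (by simpa [hz] using hW z hzW) (by simpa using dotProduct_self_star_nonneg z.1))
  exact Prod.ext h1 (by simp [hz, h1])

end Pairing

section Monotone

variable {n : ℕ}

lemma isMonotoneSet_coe_iff (T : Submodule ℝ ((Fin n → ℝ) × (Fin n → ℝ))) :
    IsMonotoneSet (T : Set ((Fin n → ℝ) × (Fin n → ℝ))) ↔ ∀ z ∈ T, 0 ≤ z.1 ⬝ᵥ z.2 :=
  ⟨fun h z hz => by simpa using h z hz 0 T.zero_mem,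
    fun h a ha b hb => h (a - b) (T.sub_mem ha hb)⟩

lemma isMaxMonotoneSet_of_le_finrank (T : Submodule ℝ ((Fin n → ℝ) × (Fin n → ℝ)))
    (hT : ∀ z ∈ T, 0 ≤ z.1 ⬝ᵥ z.2) (hdim : n ≤ Module.finrank ℝ T) :
    IsMaxMonotoneSet (T : Set ((Fin n → ℝ) × (Fin n → ℝ))) := by
  refine ⟨(isMonotoneSet_coe_iff T).2 hT, fun a ha => ?_⟩
  have hsmul (t : ℝ) (x : (Fin n → ℝ) × (Fin n → ℝ)) :
      (t • x).1 ⬝ᵥ (t • x).2 = t * t * (x.1 ⬝ᵥ x.2) := by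
    simp only [Prod.smul_fst, Prod.smul_snd, smul_dotProduct, dotProduct_smul, smul_eq_mul]
    ring
  have hnonneg : ∀ z ∈ T ⊔ Submodule.span ℝ {a}, 0 ≤ z.1 ⬝ᵥ z.2 := by
    intro z hz
    obtain ⟨w, hw, s, hs, rfl⟩ := Submodule.mem_sup.1 hz
    obtain ⟨t, rfl⟩ := Submodule.mem_span_singleton.1 hs
    rcases eq_or_ne t 0 with rfl | ht
    · simpa using hT w hw
    have hwt : w + t • a = t • (a - -(t⁻¹ • w)) := by
      rw [sub_neg_eq_add, smul_add, smul_smul, mul_inv_cancel₀ ht, one_smul, add_comm]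
    rw [hwt, hsmul]
    exact mul_nonneg (mul_self_nonneg t) (ha _ (T.neg_mem (T.smul_mem _ hw)))
  have hle : T ⊔ Submodule.span ℝ {a} ≤ T := by
    refine (Submodule.eq_of_le_of_finrank_le le_sup_left ?_).ge
    have := finrank_le_card_of_forall_dotProduct_nonneg hnonneg
    rw [Fintype.card_fin] at this
    exact this.trans hdim
  exact hle (Submodule.mem_sup_right (Submodule.mem_span_singleton_self a))

end Monotone

section LinearRelation

open Module

variable {n p : ℕ} (A B : Matrix (Fin p) (Fin n) ℝ)

def relationGraph : Submodule ℝ ((Fin n → ℝ) × (Fin n → ℝ)) :=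
  LinearMap.ker (A.mulVecLin.coprod B.mulVecLin)

def transposePair : (Fin p → ℝ) →ₗ[ℝ] (Fin n → ℝ) × (Fin n → ℝ) :=
  Bᵀ.mulVecLin.prod Aᵀ.mulVecLin

noncomputable def extendedGraph : Submodule ℝ ((Fin n → ℝ) × (Fin n → ℝ)) :=
  relationGraph A B ⊔ (Vpos (B * Aᵀ)).map (transposePair A B)

variable {A B}

@[simp]
lemma mem_relationGraph {q : (Fin n → ℝ) × (Fin n → ℝ)} :
    q ∈ relationGraph A B ↔ A *ᵥ q.1 + B *ᵥ q.2 = 0 := by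
  simp [relationGraph]

@[simp]
lemma transposePair_apply (u : Fin p → ℝ) : transposePair A B u = (Bᵀ *ᵥ u, Aᵀ *ᵥ u) := rfl

lemma coe_extendedGraph :
    (extendedGraph A B : Set ((Fin n → ℝ) × (Fin n → ℝ))) =
      {q | A *ᵥ q.1 + B *ᵥ q.2 = 0} + (fun u => (Bᵀ *ᵥ u, Aᵀ *ᵥ u)) '' ↑(Vpos (B * Aᵀ)) := by
  rw [extendedGraph, Submodule.coe_sup, Submodule.map_coe]
  congr 1

lemma dotProduct_transposePair (u : Fin p → ℝ) :
    (transposePair A B u).1 ⬝ᵥ (transposePair A B u).2 = u ⬝ᵥ ((B * Aᵀ) *ᵥ u) := by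
  rw [transposePair_apply, mulVec_transpose, ← dotProduct_mulVec, mulVec_mulVec]

lemma dotProduct_add_transposePair {g : (Fin n → ℝ) × (Fin n → ℝ)} (hg : g ∈ relationGraph A B)
    (u : Fin p → ℝ) :
    (g + transposePair A B u).1 ⬝ᵥ (g + transposePair A B u).2 =
      g.1 ⬝ᵥ g.2 + u ⬝ᵥ ((B * Aᵀ) *ᵥ u) := by
  have h1 : g.1 ⬝ᵥ (Aᵀ *ᵥ u) = (A *ᵥ g.1) ⬝ᵥ u := by rw [dotProduct_mulVec, vecMul_transpose]
  have h2 : (Bᵀ *ᵥ u) ⬝ᵥ g.2 = (B *ᵥ g.2) ⬝ᵥ u := by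
    rw [dotProduct_comm, dotProduct_mulVec, vecMul_transpose]
  have hcross : g.1 ⬝ᵥ (Aᵀ *ᵥ u) + (Bᵀ *ᵥ u) ⬝ᵥ g.2 = 0 := by
    rw [h1, h2, ← add_dotProduct, mem_relationGraph.1 hg, zero_dotProduct]
  have hquad := dotProduct_transposePair (A := A) (B := B) u
  simp only [transposePair_apply, Prod.fst_add, Prod.snd_add, dotProduct_add, add_dotProduct]
    at hquad ⊢
  linarith

lemma transposePair_mem_relationGraph_iff {u : Fin p → ℝ} :
    transposePair A B u ∈ relationGraph A B ↔ u ∈ Vzero (B * Aᵀ) := by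
  rw [mem_relationGraph, Vzero, Module.End.mem_eigenspace_iff, mulVecLin_apply, zero_smul,
    transpose_mul, transpose_transpose, add_mulVec, ← mulVec_mulVec, ← mulVec_mulVec, add_comm,
    transposePair_apply]

lemma transposePair_injective (hrank : (fromCols A B).rank = p) :
    Function.Injective (transposePair A B) := by
  have hker : LinearMap.ker (fromCols A B)ᵀ.mulVecLin = ⊥ := by
    have h := LinearMap.finrank_range_add_finrank_ker (fromCols A B)ᵀ.mulVecLin
    rw [← rank, rank_transpose, hrank, finrank_fin_fun] at h
    exact Submodule.finrank_eq_zero.1 (by omega)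
  rw [← LinearMap.ker_eq_bot, eq_bot_iff]
  intro u hu
  rw [LinearMap.mem_ker, transposePair_apply, Prod.mk_eq_zero] at hu
  rw [← hker, LinearMap.mem_ker, mulVecLin_apply, transpose_fromCols, fromRows_mulVec, hu.1, hu.2]
  exact Sum.elim_zero_zero

lemma finrank_relationGraph (hrank : (fromCols A B).rank = p) :
    finrank ℝ (relationGraph A B) + p = n + n := by
  have hcomp : A.mulVecLin.coprod B.mulVecLin = (fromCols A B).mulVecLin ∘ₗ
      (LinearEquiv.sumArrowLequivProdArrow (Fin n) (Fin n) ℝ ℝ).symm.toLinearMap := by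
    refine LinearMap.ext fun q => ?_
    exact (fromCols_mulVec_sumElim A B q.1 q.2).symm
  have h := LinearMap.finrank_range_add_finrank_ker (A.mulVecLin.coprod B.mulVecLin)
  rw [hcomp, LinearMap.range_comp_of_range_eq_top _ (LinearEquiv.range _), ← rank, hrank, ← hcomp,
    finrank_prod, finrank_fin_fun] at h
  rw [relationGraph]
  omega

end LinearRelation

section ExtendedGraph

open Module

variable {n p : ℕ} {A B : Matrix (Fin p) (Fin n) ℝ}

lemma dotProduct_nonneg_of_mem_extendedGraph (hG : ∀ g ∈ relationGraph A B, 0 ≤ g.1 ⬝ᵥ g.2)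
    {z : (Fin n → ℝ) × (Fin n → ℝ)} (hz : z ∈ extendedGraph A B) : 0 ≤ z.1 ⬝ᵥ z.2 := by
  obtain ⟨g, hg, _, ⟨u, hu, rfl⟩, rfl⟩ := Submodule.mem_sup.1 hz
  rw [dotProduct_add_transposePair hg]
  exact add_nonneg (hG g hg) (dotProduct_mulVec_nonneg_of_mem_Vpos hu)

lemma disjoint_relationGraph_map_Vpos :
    Disjoint (relationGraph A B) ((Vpos (B * Aᵀ)).map (transposePair A B)) := by
  refine Submodule.disjoint_def.2 ?_
  rintro _ hG ⟨u, hu, rfl⟩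
  have hu0 : u = 0 :=
    Submodule.disjoint_def.1 disjoint_Vpos_Vzero u hu (transposePair_mem_relationGraph_iff.1 hG)
  rw [hu0, map_zero]

lemma le_finrank_Vpos_add (hrank : (fromCols A B).rank = p) :
    p ≤ finrank ℝ (Vpos (B * Aᵀ)) + n := by
  have hinj := transposePair_injective hrank
  have hnonpos : finrank ℝ ↥(Vzero (B * Aᵀ) ⊔ Vneg (B * Aᵀ)) ≤ n := by
    rw [(Submodule.equivMapOfInjective _ hinj _).finrank_eq]
    refine (finrank_le_card_of_forall_dotProduct_nonpos ?_).trans_eq (Fintype.card_fin n)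
    rintro _ ⟨u, hu, rfl⟩
    rw [dotProduct_transposePair]
    exact dotProduct_mulVec_nonpos_of_mem_Vzero_sup_Vneg hu
  have htop := Submodule.finrank_add_le_finrank_add_finrank (Vpos (B * Aᵀ))
    (Vzero (B * Aᵀ) ⊔ Vneg (B * Aᵀ))
  rw [Vpos_sup_Vzero_sup_Vneg, finrank_top, finrank_fin_fun] at htop
  omega

lemma le_finrank_extendedGraph (hrank : (fromCols A B).rank = p) :
    n ≤ finrank ℝ (extendedGraph A B) := by
  have hsum := Submodule.finrank_sup_add_finrank_inf_eq (relationGraph A B)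
    ((Vpos (B * Aᵀ)).map (transposePair A B))
  rw [disjoint_relationGraph_map_Vpos.eq_bot, finrank_bot, add_zero,
    ← (Submodule.equivMapOfInjective _ (transposePair_injective hrank) _).finrank_eq] at hsum
  have := finrank_relationGraph hrank
  have := le_finrank_Vpos_add hrank
  rw [extendedGraph]
  omega

end ExtendedGraph

/-- if `G` is monotone, then
`gra G̃ = gra G + {(Bᵀu, Aᵀu) : u ∈ V₊(BAᵀ)}` is maximally monotone and extends `gra G`. -/
theorem stmt12 {n p : ℕ} (A B : Matrix (Fin p) (Fin n) ℝ)
    (hrank : (Matrix.fromCols A B).rank = p)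
    (hmono : IsMonotoneSet {q : (Fin n → ℝ) × (Fin n → ℝ) | A *ᵥ q.1 + B *ᵥ q.2 = 0}) :
    IsMaxMonotoneSet
      ({q : (Fin n → ℝ) × (Fin n → ℝ) | A *ᵥ q.1 + B *ᵥ q.2 = 0} +
        ((fun u => (Bᵀ *ᵥ u, Aᵀ *ᵥ u)) '' ↑(Vpos (B * Aᵀ)))) ∧
    {q : (Fin n → ℝ) × (Fin n → ℝ) | A *ᵥ q.1 + B *ᵥ q.2 = 0} ⊆
      {q : (Fin n → ℝ) × (Fin n → ℝ) | A *ᵥ q.1 + B *ᵥ q.2 = 0} +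
        ((fun u => (Bᵀ *ᵥ u, Aᵀ *ᵥ u)) '' ↑(Vpos (B * Aᵀ))) := by
  have hG : {q : (Fin n → ℝ) × (Fin n → ℝ) | A *ᵥ q.1 + B *ᵥ q.2 = 0} = relationGraph A B := by
    ext q
    exact mem_relationGraph.symm
  rw [← coe_extendedGraph, hG]
  rw [hG, isMonotoneSet_coe_iff] at hmono
  exact ⟨isMaxMonotoneSet_of_le_finrank _ (fun _ => dotProduct_nonneg_of_mem_extendedGraph hmono)
    (le_finrank_extendedGraph hrank), SetLike.coe_subset_coe.2 le_sup_left⟩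
end

section
/- Let n, p ∈ ℕ, let A, B ∈ ℝ^{p×n}, assume the p×2n matrix (A B) has rank p, and let G be the linear relation with graph gra G = {(x,x*) ∈ ℝⁿ × ℝⁿ : Ax + Bx* = 0}. Then the following are equivalent: (i) G is maximally monotone; (ii) p = n and G is monotone; (iii) p = n and the symmetric matrix ABᵀ + BAᵀ is negative semidefinite. -/
open Matrix Pointwise

/-!
A monotone subspace of `ℝⁿ × ℝⁿ` meets the antidiagonal `{(x, -x)}` only in `0`, so its
dimension is at most `n`; one of dimension `n` is maximal, because adding a point that is
monotonically related to it keeps it monotone. Conversely, the adjoint of a maximally monotone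
subspace `S` is monotone, and if `dim S < n` the adjoint would contain some `(-c, c)` with `c ≠ 0`;
so a maximally monotone subspace has dimension exactly `n`. Since `gra G` has dimension `2n - p`,
this gives (i) ⇔ (ii).

The adjoint of `G` is `{(Bᵀu, -Aᵀu)}`, whose monotonicity is the negative semidefiniteness of
`ABᵀ + BAᵀ`. For (ii) ⇒ (iii) apply "the adjoint of a maximally monotone subspace is monotone"
to `G`; for (iii) ⇒ (ii) apply it to this adjoint, which has dimension `p = n` and whose own
adjoint contains `gra G`.
-/

open Module

section MonotoneSubspace

variable {n : ℕ} (S : Submodule ℝ ((Fin n → ℝ) × (Fin n → ℝ)))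

theorem isMonotoneSet_iff_dotProduct_nonneg :
    IsMonotoneSet (S : Set ((Fin n → ℝ) × (Fin n → ℝ))) ↔ ∀ q ∈ S, 0 ≤ q.1 ⬝ᵥ q.2 :=
  ⟨fun h q hq => by simpa using h q hq 0 S.zero_mem,
    fun h a ha b hb => h (a - b) (S.sub_mem ha hb)⟩

theorem finrank_le_of_isMonotoneSet (h : IsMonotoneSet (S : Set ((Fin n → ℝ) × (Fin n → ℝ)))) :
    finrank ℝ S ≤ n := by
  rw [isMonotoneSet_iff_dotProduct_nonneg] at h
  have hinj : Function.Injective ((LinearMap.fst ℝ _ _ + LinearMap.snd ℝ _ _) ∘ₗ S.subtype) := by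
    rw [← LinearMap.ker_eq_bot, LinearMap.ker_eq_bot']
    rintro ⟨⟨x, y⟩, hq⟩ hxy
    obtain rfl : y = -x := eq_neg_of_add_eq_zero_right (by simpa using hxy)
    have hx : x = 0 := by
      have := h _ hq
      simp only [dotProduct_neg, Left.nonneg_neg_iff] at this
      exact dotProduct_self_eq_zero.mp
        (this.antisymm (by simpa using dotProduct_self_star_nonneg x))
    simp [hx]
  simpa using LinearMap.finrank_le_finrank_of_injective hinj

theorem isMaxMonotoneSet_of_le_finrank_s13 (h : IsMonotoneSet (S : Set ((Fin n → ℝ) × (Fin n → ℝ))))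
    (hS : n ≤ finrank ℝ S) : IsMaxMonotoneSet (S : Set ((Fin n → ℝ) × (Fin n → ℝ))) := by
  refine ⟨h, fun a ha => ?_⟩
  rw [isMonotoneSet_iff_dotProduct_nonneg] at h
  have hmono : ∀ q ∈ S ⊔ ℝ ∙ a, 0 ≤ q.1 ⬝ᵥ q.2 := by
    intro q hq
    obtain ⟨s, hs, _, ht, rfl⟩ := Submodule.mem_sup.mp hq
    obtain ⟨t, rfl⟩ := Submodule.mem_span_singleton.mp ht
    rcases eq_or_ne t 0 with rfl | ht0
    · simpa using h s hs
    · have hsa : s + t • a = t • (a - (-t⁻¹) • s) := by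
        rw [smul_sub, smul_smul, mul_neg, mul_inv_cancel₀ ht0, neg_one_smul, sub_neg_eq_add,
          add_comm]
      rw [hsa, Prod.smul_fst, Prod.smul_snd, smul_dotProduct, dotProduct_smul, smul_eq_mul,
        smul_eq_mul, ← mul_assoc]
      exact mul_nonneg (mul_self_nonneg t) (ha _ (S.smul_mem (-t⁻¹) hs))
  have hle := finrank_le_of_isMonotoneSet _ ((isMonotoneSet_iff_dotProduct_nonneg _).mpr hmono)
  rw [SetLike.mem_coe, Submodule.eq_of_le_of_finrank_le le_sup_left (hle.trans hS)]
  exact Submodule.mem_sup_right (Submodule.mem_span_singleton_self a)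

variable {S} in
theorem IsMaxMonotoneSet.dotProduct_nonneg_of_mem_adjGraph
    (h : IsMaxMonotoneSet (S : Set ((Fin n → ℝ) × (Fin n → ℝ))))
    {q : (Fin n → ℝ) × (Fin n → ℝ)} (hq : q ∈ adjGraph (S : Set ((Fin n → ℝ) × (Fin n → ℝ)))) :
    0 ≤ q.1 ⬝ᵥ q.2 := by
  by_contra! hneg
  -- `(q.1, -q.2)` is monotonically related to `S`, hence in `S`; pairing it with `q` then
  -- forces `q.1 ⬝ᵥ q.2 = 0`.
  have hmem : (q.1, -q.2) ∈ S := by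
    refine h.2 _ fun b hb => ?_
    have hqb := hq b hb
    have hb := (isMonotoneSet_iff_dotProduct_nonneg S).mp h.1 b hb
    simp only [sub_dotProduct, dotProduct_sub, dotProduct_neg, dotProduct_comm b.1 q.2] at hqb ⊢
    linarith
  have hqq := hq _ hmem
  simp only [dotProduct_neg, dotProduct_comm q.2 q.1] at hqq
  linarith

theorem le_finrank_of_isMaxMonotoneSet
    (h : IsMaxMonotoneSet (S : Set ((Fin n → ℝ) × (Fin n → ℝ)))) : n ≤ finrank ℝ S := by
  by_contra! hlt
  set W := S.map (LinearMap.fst ℝ (Fin n → ℝ) (Fin n → ℝ) + LinearMap.snd ℝ _ _)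
  have hW : W < ⊤ := Submodule.lt_top_of_finrank_lt_finrank <| by
    simpa using (Submodule.finrank_map_le _ S).trans_lt hlt
  obtain ⟨f, hf0, hWf⟩ := W.exists_le_ker_of_lt_top hW
  obtain ⟨c, rfl⟩ := (dotProductEquiv ℝ (Fin n)).surjective f
  have hc : c ≠ 0 := by rintro rfl; exact hf0 (map_zero _)
  have hmem : (-c, c) ∈ adjGraph (S : Set ((Fin n → ℝ) × (Fin n → ℝ))) := fun s hs => by
    have := hWf ⟨s, hs, rfl⟩
    simp_all [dotProduct_add]
  have hcc := h.dotProduct_nonneg_of_mem_adjGraph hmem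
  simp only [neg_dotProduct, Left.nonneg_neg_iff] at hcc
  exact hc <| dotProduct_self_eq_zero.mp
    (hcc.antisymm (by simpa using dotProduct_self_star_nonneg c))

theorem isMaxMonotoneSet_iff_finrank_eq :
    IsMaxMonotoneSet (S : Set ((Fin n → ℝ) × (Fin n → ℝ))) ↔
      IsMonotoneSet (S : Set ((Fin n → ℝ) × (Fin n → ℝ))) ∧ finrank ℝ S = n :=
  ⟨fun h => ⟨h.1,
    (finrank_le_of_isMonotoneSet S h.1).antisymm (le_finrank_of_isMaxMonotoneSet S h)⟩,
    fun h => isMaxMonotoneSet_of_le_finrank_s13 S h.1 h.2.ge⟩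

end MonotoneSubspace

namespace Matrix

variable {m k l R : Type*} [Fintype k] [Fintype l]

theorem range_coprod_mulVecLin [CommSemiring R] (A : Matrix m k R) (B : Matrix m l R) :
    LinearMap.range (A.mulVecLin.coprod B.mulVecLin) =
      LinearMap.range (fromCols A B).mulVecLin := by
  ext y
  simp only [LinearMap.mem_range, LinearMap.coprod_apply, mulVecLin_apply, Prod.exists]
  constructor
  · rintro ⟨x, x', rfl⟩
    exact ⟨Sum.elim x x', fromCols_mulVec_sumElim A B x x'⟩
  · rintro ⟨v, rfl⟩
    exact ⟨v ∘ Sum.inl, v ∘ Sum.inr, (fromCols_mulVec A B v).symm⟩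

theorem dotProduct_mul_transpose_mulVec [Fintype m] [CommSemiring R] (A B : Matrix m k R)
    (u : m → R) : u ⬝ᵥ (A * Bᵀ) *ᵥ u = (Aᵀ *ᵥ u) ⬝ᵥ (Bᵀ *ᵥ u) := by
  rw [← mulVec_mulVec, dotProduct_mulVec, ← mulVec_transpose]

end Matrix

section LinearRelation

variable {n p : ℕ} (A B : Matrix (Fin p) (Fin n) ℝ)

def kerGraph : Submodule ℝ ((Fin n → ℝ) × (Fin n → ℝ)) :=
  LinearMap.ker (A.mulVecLin.coprod B.mulVecLin)

theorem coe_kerGraph :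
    (kerGraph A B : Set ((Fin n → ℝ) × (Fin n → ℝ))) = {q | A *ᵥ q.1 + B *ᵥ q.2 = 0} :=
  rfl

/-- The adjoint `G*` of the relation `gra G = kerGraph A B`, parametrized as `{(Bᵀu, -Aᵀu)}`. -/
def adjointGraph : Submodule ℝ ((Fin n → ℝ) × (Fin n → ℝ)) :=
  LinearMap.range (Bᵀ.mulVecLin.prod (-Aᵀ.mulVecLin))

variable {A B}

theorem finrank_kerGraph_add (hrank : (fromCols A B).rank = p) :
    finrank ℝ (kerGraph A B) + p = n + n := by
  have h := LinearMap.finrank_range_add_finrank_ker (A.mulVecLin.coprod B.mulVecLin)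
  rw [range_coprod_mulVecLin, ← rank, hrank, finrank_prod, finrank_fin_fun] at h
  rw [kerGraph]
  omega

theorem finrank_adjointGraph (hrank : (fromCols A B).rank = p) :
    finrank ℝ (adjointGraph A B) = p := by
  have hker : LinearMap.ker (Bᵀ.mulVecLin.prod (-Aᵀ.mulVecLin)) =
      LinearMap.ker (fromCols A B)ᵀ.mulVecLin := by
    ext u
    simp [transpose_fromCols, ← Sum.elim_zero_zero, Sum.elim_eq_iff, mulVec_transpose, and_comm]
  have h := LinearMap.finrank_range_add_finrank_ker (Bᵀ.mulVecLin.prod (-Aᵀ.mulVecLin))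
  have hT := LinearMap.finrank_range_add_finrank_ker (fromCols A B)ᵀ.mulVecLin
  rw [← rank, rank_transpose, hrank, finrank_fin_fun] at hT
  rw [hker, finrank_fin_fun] at h
  rw [adjointGraph]
  omega

variable (A B)

theorem transpose_mulVec_dotProduct_add (u : Fin p → ℝ) (x y : Fin n → ℝ) :
    (Aᵀ *ᵥ u) ⬝ᵥ x + (Bᵀ *ᵥ u) ⬝ᵥ y = u ⬝ᵥ (A *ᵥ x + B *ᵥ y) := by
  rw [dotProduct_add, dotProduct_mulVec, dotProduct_mulVec, mulVec_transpose, mulVec_transpose]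

theorem mem_adjGraph_kerGraph (u : Fin p → ℝ) :
    (Bᵀ *ᵥ u, -(Aᵀ *ᵥ u)) ∈ adjGraph (kerGraph A B : Set ((Fin n → ℝ) × (Fin n → ℝ))) := by
  intro q (hq : A *ᵥ q.1 + B *ᵥ q.2 = 0)
  have h := transpose_mulVec_dotProduct_add A B u q.1 q.2
  rw [hq, dotProduct_zero] at h
  simp only [neg_dotProduct]
  linarith

theorem kerGraph_subset_adjGraph :
    (kerGraph A B : Set ((Fin n → ℝ) × (Fin n → ℝ))) ⊆ adjGraph (adjointGraph A B : Set _) := by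
  rintro q (hq : A *ᵥ q.1 + B *ᵥ q.2 = 0) _ ⟨u, rfl⟩
  have h := transpose_mulVec_dotProduct_add A B u q.1 q.2
  rw [hq, dotProduct_zero] at h
  show q.2 ⬝ᵥ (Bᵀ *ᵥ u) - q.1 ⬝ᵥ -(Aᵀ *ᵥ u) = 0
  rw [dotProduct_neg, dotProduct_comm q.1, dotProduct_comm q.2]
  linarith

theorem posSemidef_neg_mul_transpose_add_iff :
    (-(A * Bᵀ + B * Aᵀ)).PosSemidef ↔ ∀ u, 0 ≤ (Bᵀ *ᵥ u) ⬝ᵥ -(Aᵀ *ᵥ u) := by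
  have hsymm : (-(A * Bᵀ + B * Aᵀ)).IsHermitian := by
    simp [IsHermitian, conjTranspose_eq_transpose_of_trivial, transpose_add, transpose_mul,
      add_comm]
  have hquad : ∀ u, star u ⬝ᵥ (-(A * Bᵀ + B * Aᵀ)) *ᵥ u = 2 * ((Bᵀ *ᵥ u) ⬝ᵥ -(Aᵀ *ᵥ u)) := by
    intro u
    rw [star_trivial, neg_mulVec, add_mulVec, dotProduct_neg, dotProduct_add,
      dotProduct_mul_transpose_mulVec, dotProduct_mul_transpose_mulVec, dotProduct_neg,
      dotProduct_comm (Aᵀ *ᵥ u)]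
    ring
  simp only [posSemidef_iff_dotProduct_mulVec, hsymm, true_and, hquad]
  exact forall_congr' fun u => mul_nonneg_iff_of_pos_left two_pos

end LinearRelation

/-- the following are equivalent: (i) `G` is maximally monotone;
(ii) `p = n` and `G` is monotone; (iii) `p = n` and `ABᵀ + BAᵀ` is negative semidefinite. -/
theorem stmt13 {n p : ℕ} (A B : Matrix (Fin p) (Fin n) ℝ)
    (hrank : (Matrix.fromCols A B).rank = p) :
    (IsMaxMonotoneSet {q : (Fin n → ℝ) × (Fin n → ℝ) | A *ᵥ q.1 + B *ᵥ q.2 = 0} ↔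
      (p = n ∧ IsMonotoneSet {q : (Fin n → ℝ) × (Fin n → ℝ) | A *ᵥ q.1 + B *ᵥ q.2 = 0})) ∧
    ((p = n ∧ IsMonotoneSet {q : (Fin n → ℝ) × (Fin n → ℝ) | A *ᵥ q.1 + B *ᵥ q.2 = 0}) ↔
      (p = n ∧ (-(A * Bᵀ + B * Aᵀ)).PosSemidef)) := by
  rw [← coe_kerGraph]
  have hdim := finrank_kerGraph_add hrank
  have hmax : IsMaxMonotoneSet (kerGraph A B : Set ((Fin n → ℝ) × (Fin n → ℝ))) ↔
      p = n ∧ IsMonotoneSet (kerGraph A B : Set ((Fin n → ℝ) × (Fin n → ℝ))) := by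
    rw [isMaxMonotoneSet_iff_finrank_eq]
    exact ⟨fun ⟨hmono, hS⟩ => ⟨by omega, hmono⟩, fun ⟨hpn, hmono⟩ => ⟨hmono, by omega⟩⟩
  refine ⟨hmax, ⟨fun hG => ⟨hG.1, ?_⟩, fun ⟨hpn, hpsd⟩ => ⟨hpn, ?_⟩⟩⟩
  · rw [posSemidef_neg_mul_transpose_add_iff]
    exact fun u => (hmax.mpr hG).dotProduct_nonneg_of_mem_adjGraph (mem_adjGraph_kerGraph A B u)
  · have hadj : IsMaxMonotoneSet (adjointGraph A B : Set ((Fin n → ℝ) × (Fin n → ℝ))) := by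
      refine isMaxMonotoneSet_of_le_finrank_s13 _ ?_ ((finrank_adjointGraph hrank).trans hpn).ge
      rw [isMonotoneSet_iff_dotProduct_nonneg]
      rintro _ ⟨u, rfl⟩
      exact (posSemidef_neg_mul_transpose_add_iff A B).mp hpsd u
    rw [isMonotoneSet_iff_dotProduct_nonneg]
    exact fun q hq => hadj.dotProduct_nonneg_of_mem_adjGraph (kerGraph_subset_adjGraph A B hq)
end
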